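/- For all terms s1, s2, t1, t2 : T, if g s1 t1 ≈ g s2 t2 and t1 is not ≈-equivalent to t2, then s1 is not ≈-equivalent to s2. -/
import Mathlib


/-- Element-terms generated by atoms `A` and binary constructors `h`, `g`. -/
inductive T (A : Type*) : Type _
  | atom : A → T A
  | h : T A → T A → T A
  | g : T A → T A → T A

/-- The smallest congruence on `T A` containing `g (h x y) y ≈ x`,
i.e. equality modulo the collapsing rewrite rule `g(h(x,y), y) → x`. -/
inductive Eqv {A : Type*} : T A → T A → Prop
  | collapse (x y : T A) : Eqv (T.g (T.h x y) y) x
  | refl (x : T A) : Eqv x x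
  | symm {x y : T A} : Eqv x y → Eqv y x
  | trans {x y z : T A} : Eqv x y → Eqv y z → Eqv x z
  | hcong {x₁ x₂ y₁ y₂ : T A} : Eqv x₁ x₂ → Eqv y₁ y₂ → Eqv (T.h x₁ y₁) (T.h x₂ y₂)
  | gcong {x₁ x₂ y₁ y₂ : T A} : Eqv x₁ x₂ → Eqv y₁ y₂ → Eqv (T.g x₁ y₁) (T.g x₂ y₂)

open Classical in
/-- Normalizer for a `g` node whose arguments are already normal. -/
noncomputable def gnf {A : Type*} : T A → T A → T A
  | T.h a b, c => if b = c then a else T.g (T.h a b) c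
  | T.atom a, c => T.g (T.atom a) c
  | T.g a b, c => T.g (T.g a b) c

/-- Innermost normalization under the rule `g (h x y) y → x`. -/
noncomputable def nf {A : Type*} : T A → T A
  | T.atom a => T.atom a
  | T.h x y => T.h (nf x) (nf y)
  | T.g x y => gnf (nf x) (nf y)

def size {A : Type*} : T A → ℕ
  | T.atom _ => 1
  | T.h x y => size x + size y + 1
  | T.g x y => size x + size y + 1

theorem eqv_gnf {A : Type*} (u v : T A) : Eqv (T.g u v) (gnf u v) := by
  cases u with
  | atom a => exact Eqv.refl _
  | g a b => exact Eqv.refl _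
  | h a b =>
    by_cases hbv : b = v
    · subst hbv
      simpa [gnf] using Eqv.collapse a b
    · simp only [gnf, if_neg hbv]
      exact Eqv.refl _

theorem eqv_nf {A : Type*} (x : T A) : Eqv x (nf x) := by
  induction x with
  | atom a => exact Eqv.refl _
  | h a b iha ihb => exact Eqv.hcong iha ihb
  | g a b iha ihb => exact Eqv.trans (Eqv.gcong iha ihb) (eqv_gnf _ _)

theorem nf_eq_of_eqv {A : Type*} {x y : T A} (h : Eqv x y) : nf x = nf y := by
  induction h with
  | collapse x y => simp [nf, gnf]
  | refl x => rfl
  | symm _ ih => exact ih.symm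
  | trans _ _ ih1 ih2 => exact ih1.trans ih2
  | hcong _ _ ih1 ih2 => simp [nf, ih1, ih2]
  | gcong _ _ ih1 ih2 => simp [nf, ih1, ih2]

theorem gnf_right_inj {A : Type*} (s u v : T A) (h : gnf s u = gnf s v) : u = v := by
  cases s with
  | atom a => simpa [gnf] using h
  | g a b => simpa [gnf] using h
  | h a b =>
    by_cases hbu : b = u <;> by_cases hbv : b = v
    · exact hbu ▸ hbv ▸ rfl
    · simp only [gnf, if_pos hbu, if_neg hbv] at h
      have := congrArg size h
      simp [size] at this
      omega
    · simp only [gnf, if_neg hbu, if_pos hbv] at h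
      have := congrArg size h
      simp [size] at this
      omega
    · simp only [gnf, if_neg hbu, if_neg hbv] at h
      exact (T.g.injEq .. ▸ h).2

/-- If `g s1 t1 ≈ g s2 t2` and `t1 ≉ t2`, then `s1 ≉ s2`. -/
theorem g_neq_of_eqv {A : Type*} :
    ∀ s1 s2 t1 t2 : T A, Eqv (T.g s1 t1) (T.g s2 t2) → ¬ Eqv t1 t2 → ¬ Eqv s1 s2 := by
  intro s1 s2 t1 t2 hg ht hs
  apply ht
  have h1 : gnf (nf s1) (nf t1) = gnf (nf s2) (nf t2) := nf_eq_of_eqv hg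
  have h2 : nf s1 = nf s2 := nf_eq_of_eqv hs
  rw [← h2] at h1
  have h3 : nf t1 = nf t2 := gnf_right_inj _ _ _ h1
  exact Eqv.trans (eqv_nf t1) (h3 ▸ Eqv.symm (eqv_nf t2))
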